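/- For all 1-free star expressions x, y, z ∈ StExp, the equation (x*y)·z = x*(y·z) is derivable in SL*: SL* ⊢ (x*y)z = x*(yz). -/
import Mathlib


/-- A chart over action alphabet `Act` with state space `X`: each state is assigned a
finite set of transitions, either `(a, none)` (i.e. `x →a ✓`) or `(a, some y)` (i.e. `x →a y`). -/
structure Chart (Act X : Type) where
  tr : X → Finset (Act × Option X)

/-- `x →a ✓` in the chart `C`. -/
def Chart.Halts {Act X : Type} (C : Chart Act X) (x : X) : Prop :=
  ∃ a : Act, (a, (none : Option X)) ∈ C.tr x

/-- `x → y` (for some action) in the chart `C`. -/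
def Chart.StepRel {Act X : Type} (C : Chart Act X) (x y : X) : Prop :=
  ∃ a : Act, (a, some y) ∈ C.tr x

/-- `R` is a bisimulation between the charts `C` and `D`. -/
def IsBisim {Act X Y : Type} (C : Chart Act X) (D : Chart Act Y) (R : X → Y → Prop) : Prop :=
  ∀ x y, R x y → ∀ a : Act,
    (((a, (none : Option X)) ∈ C.tr x) ↔ ((a, (none : Option Y)) ∈ D.tr y)) ∧
    (∀ x', (a, some x') ∈ C.tr x → ∃ y', (a, some y') ∈ D.tr y ∧ R x' y') ∧
    (∀ y', (a, some y') ∈ D.tr y → ∃ x', (a, some x') ∈ C.tr x ∧ R x' y')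

/-- States `x` of `C` and `y` of `D` are bisimilar. -/
def Bisimilar {Act X Y : Type} (C : Chart Act X) (D : Chart Act Y) (x : X) (y : Y) : Prop :=
  ∃ R, IsBisim C D R ∧ R x y

/-- A chart homomorphism is a function whose graph is a bisimulation. -/
def IsChartHom {Act X Y : Type} (C : Chart Act X) (D : Chart Act Y) (h : X → Y) : Prop :=
  IsBisim C D (fun x y => h x = y)

/-- 1-free star expressions over the alphabet `Act`. -/
inductive StExp (Act : Type) : Type where
  | zero : StExp Act
  | act : Act → StExp Act
  | add : StExp Act → StExp Act → StExp Act
  | mul : StExp Act → StExp Act → StExp Act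
  | star : StExp Act → StExp Act → StExp Act
deriving DecidableEq

/-- Continuation after a transition of the left operand: `✓` continues as `s`,
and a state `t` continues as `t·s`. -/
def StExp.seqAfter {Act : Type} (s : StExp Act) : Option (StExp Act) → StExp Act
  | none => s
  | some t => t.mul s

/-- The transition function of the syntactic chart, following Antimirov-style rules. -/
def StExp.tr {Act : Type} [DecidableEq Act] : StExp Act → Finset (Act × Option (StExp Act))
  | .zero => ∅
  | .act a => {(a, none)}
  | .add r s => r.tr ∪ s.tr
  | .mul r s => r.tr.image (fun p => (p.1, some (StExp.seqAfter s p.2)))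
  | .star r s =>
      (r.tr.image (fun p => (p.1, some (StExp.seqAfter (StExp.star r s) p.2)))) ∪ s.tr

/-- The syntactic chart `(StExp, δ)`. -/
def synChart (Act : Type) [DecidableEq Act] : Chart Act (StExp Act) := ⟨StExp.tr⟩

/-- Derivability `SL* ⊢ r = s` from Grabmayer and Fokkink's axioms together with
the laws of equational logic. -/
inductive SLEq {Act : Type} : StExp Act → StExp Act → Prop where
  | add_comm (x y : StExp Act) : SLEq (x.add y) (y.add x)
  | add_assoc (x y z : StExp Act) : SLEq ((x.add y).add z) (x.add (y.add z))
  | add_idem (x : StExp Act) : SLEq (x.add x) x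
  | add_zero (x : StExp Act) : SLEq (x.add .zero) x
  | right_distrib (x y z : StExp Act) : SLEq ((x.add y).mul z) ((x.mul z).add (y.mul z))
  | mul_assoc (x y z : StExp Act) : SLEq ((x.mul y).mul z) (x.mul (y.mul z))
  | zero_mul (x : StExp Act) : SLEq (StExp.zero.mul x) .zero
  | star_unfold (x y : StExp Act) : SLEq (x.star y) ((x.mul (x.star y)).add y)
  | fixpoint {x y z : StExp Act} : SLEq x ((y.mul x).add z) → SLEq x (y.star z)
  | refl (x : StExp Act) : SLEq x x
  | symm {x y : StExp Act} : SLEq x y → SLEq y x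
  | trans {x y z : StExp Act} : SLEq x y → SLEq y z → SLEq x z
  | add_congr {x x' y y' : StExp Act} : SLEq x x' → SLEq y y' → SLEq (x.add y) (x'.add y')
  | mul_congr {x x' y y' : StExp Act} : SLEq x x' → SLEq y y' → SLEq (x.mul y) (x'.mul y')
  | star_congr {x x' y y' : StExp Act} : SLEq x x' → SLEq y y' → SLEq (x.star y) (x'.star y')

/-- `SL* ⊢ (x*y)z = x*(yz)` for all 1-free star expressions `x, y, z`. -/
theorem star_mul_assoc {Act : Type} (x y z : StExp Act) :
    SLEq ((x.star y).mul z) (x.star (y.mul z)) := by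
  apply SLEq.fixpoint
  exact ((SLEq.mul_congr (SLEq.star_unfold x y) (SLEq.refl z)).trans
    (SLEq.right_distrib _ _ _)).trans
    (SLEq.add_congr (SLEq.mul_assoc x (x.star y) z) (SLEq.refl _))
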